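/- arXiv:1109.0042 — 5 statements merged into one kernel-verified Lean document; each statement's English description precedes it below -/
import Mathlib

section
/- Let m ≥ 5, let ε ∈ {0,1}, and let x₁, …, x_m be real numbers. Then the sum over all sign vectors a ∈ {0,1}^m satisfying a₁ + ⋯ + a_m ≡ ε (mod 2) of ( (1/2)·Σ_{i=1}^m (−1)^{a_i} x_i )⁴ equals 2^{m−1} · (1/16) · ( 3·(Σ_{i=1}^m x_i²)² − 2·Σ_{i=1}^m x_i⁴ ). -/
/-! Write `s a = ∑ i, ±xᵢ` for the signed sum of a sign vector `a` and `χ a = ∏ i, ±1` for its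
total sign. The sum over vectors of parity `ε` is half of `∑ₐ (s a)⁴ + (-1)^ε ∑ₐ χ a (s a)⁴`.
Expanding `(s a)⁴`, every monomial involves at most four coordinates, so when `m ≥ 5` it is
unchanged by flipping some other coordinate, which negates `χ`: the twisted sum vanishes. The
untwisted sum is the fourth moment of a Rademacher sum, `2^m (3 (∑ xᵢ²)² - 2 ∑ xᵢ⁴)`, computed
together with the second moment by splitting off the first coordinate. -/

open Finset Function

namespace SignVector

variable {R : Type*} [CommRing R]

def sign (b : Bool) : R := if b then -1 else 1

@[simp] lemma sign_true : (sign true : R) = -1 := rfl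

@[simp] lemma sign_false : (sign false : R) = 1 := rfl

lemma sign_not (b : Bool) : (sign (!b) : R) = -sign b := by cases b <;> simp

section Parity

variable {ι : Type*} [Fintype ι]

def signedSum (a : ι → Bool) (x : ι → R) : R := ∑ i, sign (a i) * x i

def totalSign (a : ι → Bool) : R := ∏ i, sign (a i)

lemma totalSign_eq_neg_one_pow (a : ι → Bool) :
    (totalSign a : R) = (-1) ^ ∑ i, (if a i then 1 else 0) := by
  rw [totalSign, ← prod_pow_eq_pow_sum]
  exact prod_congr rfl fun i _ => by cases a i <;> simp

variable [DecidableEq ι]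

lemma two_mul_sum_filter_parity {ε : ℕ} (hε : ε = 0 ∨ ε = 1) (f : (ι → Bool) → R) :
    2 * ∑ a ∈ univ.filter (fun a : ι → Bool => (∑ i, (if a i then 1 else 0)) % 2 = ε), f a
      = ∑ a, f a + (-1) ^ ε * ∑ a, totalSign a * f a := by
  rw [sum_filter, mul_sum, mul_sum, ← sum_add_distrib]
  refine sum_congr rfl fun a _ => ?_
  rw [totalSign_eq_neg_one_pow, neg_one_pow_eq_pow_mod_two (∑ i, if a i then 1 else 0)]
  rcases Nat.mod_two_eq_zero_or_one (∑ i, if a i then 1 else 0) with h | h <;> rw [h] <;>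
    rcases hε with rfl | rfl <;> norm_num <;> ring

lemma totalSign_update_not (a : ι → Bool) (r : ι) :
    (totalSign (update a r (!a r)) : R) = -totalSign a := by
  rw [totalSign, totalSign,
    ← mul_prod_erase univ (fun i => (sign ((update a r (!a r) : ι → Bool) i) : R)) (mem_univ r),
    ← mul_prod_erase univ (fun i => (sign (a i) : R)) (mem_univ r), update_self, sign_not, neg_mul]
  congr 2
  exact prod_congr rfl fun i hi => by rw [update_of_ne (ne_of_mem_erase hi)]

lemma sum_totalSign_mul_eq_zero {g : (ι → Bool) → R} (r : ι)
    (hg : ∀ a, g (update a r (!a r)) = g a) :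
    ∑ a, totalSign a * g a = 0 := by
  refine sum_ninvolution (fun a : ι → Bool => update a r (!a r)) (fun a => ?_) (fun a _ h => ?_)
    (fun _ => mem_univ _) (fun a => ?_)
  · rw [totalSign_update_not, hg]; ring
  · simpa using congr_fun h r
  · simp

lemma sum_totalSign_mul_signedSum_pow_eq_zero {k : ℕ} (hk : k < Fintype.card ι) (x : ι → R) :
    ∑ a : ι → Bool, totalSign a * signedSum a x ^ k = 0 := by
  simp only [signedSum, Fintype.sum_pow, mul_sum]
  rw [sum_comm]
  refine sum_eq_zero fun p _ => ?_
  obtain ⟨r, hr⟩ : ∃ r, r ∉ Set.range p := by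
    by_contra! h
    have := Fintype.card_le_of_surjective p (Set.range_eq_univ.mp (Set.eq_univ_of_forall h))
    rw [Fintype.card_fin] at this
    omega
  refine sum_totalSign_mul_eq_zero r fun a => prod_congr rfl fun t _ => ?_
  rw [update_of_ne fun h => hr ⟨t, h⟩]

end Parity

section Moments

variable {m : ℕ}

lemma sum_comp_signedSum_fin_succ {M : Type*} [AddCommMonoid M] (φ : R → M)
    (x : Fin (m + 1) → R) :
    ∑ a : Fin (m + 1) → Bool, φ (signedSum a x)
      = ∑ a : Fin m → Bool, (φ (x 0 + signedSum a (fun i => x i.succ))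
          + φ (-x 0 + signedSum a (fun i => x i.succ))) := by
  rw [← (Fin.consEquiv fun _ => Bool).sum_comp, Fintype.sum_prod_type, Fintype.sum_bool,
    ← sum_add_distrib]
  simp only [signedSum, Fin.consEquiv, Equiv.coe_fn_mk, Fin.sum_univ_succ, Fin.cons_zero,
    Fin.cons_succ]
  exact sum_congr rfl fun _ _ => by simp [add_comm]

lemma sum_signedSum_sq (x : Fin m → R) :
    ∑ a : Fin m → Bool, signedSum a x ^ 2 = 2 ^ m * ∑ i, x i ^ 2 := by
  induction m with
  | zero => simp [signedSum]
  | succ m ih =>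
    rw [sum_comp_signedSum_fin_succ (· ^ 2), Fin.sum_univ_succ (fun i => x i ^ 2)]
    calc _ = ∑ a : Fin m → Bool, (2 * x 0 ^ 2 + 2 * signedSum a (fun i => x i.succ) ^ 2) :=
          sum_congr rfl fun a _ => by ring
      _ = _ := by
        rw [sum_add_distrib, ← mul_sum, ← mul_sum, ih]
        simp only [sum_const, card_univ, Fintype.card_fun, Fintype.card_bool, Fintype.card_fin,
          nsmul_eq_mul, Nat.cast_pow, Nat.cast_ofNat]
        ring

lemma sum_signedSum_pow_four (x : Fin m → R) :
    ∑ a : Fin m → Bool, signedSum a x ^ 4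
      = 2 ^ m * (3 * (∑ i, x i ^ 2) ^ 2 - 2 * ∑ i, x i ^ 4) := by
  induction m with
  | zero => simp [signedSum]
  | succ m ih =>
    rw [sum_comp_signedSum_fin_succ (· ^ 4), Fin.sum_univ_succ (fun i => x i ^ 2),
      Fin.sum_univ_succ (fun i => x i ^ 4)]
    calc _ = ∑ a : Fin m → Bool, (2 * x 0 ^ 4
          + 12 * x 0 ^ 2 * signedSum a (fun i => x i.succ) ^ 2
          + 2 * signedSum a (fun i => x i.succ) ^ 4) :=
          sum_congr rfl fun a _ => by ring
      _ = _ := by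
        rw [sum_add_distrib, sum_add_distrib, ← mul_sum, ← mul_sum, ← mul_sum, ih,
          sum_signedSum_sq]
        simp only [sum_const, card_univ, Fintype.card_fun, Fintype.card_bool, Fintype.card_fin,
          nsmul_eq_mul, Nat.cast_pow, Nat.cast_ofNat]
        ring

end Moments

end SignVector

open SignVector

theorem stmt_3 (m : ℕ) (hm : 5 ≤ m) (ε : ℕ) (hε : ε = 0 ∨ ε = 1) (x : Fin m → ℝ) :
    ∑ a ∈ Finset.univ.filter
        (fun a : Fin m → Bool => (∑ i, (if a i then 1 else 0)) % 2 = ε),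
        ((1/2) * ∑ i, (if a i then (-1 : ℝ) else 1) * x i) ^ 4
      = 2 ^ (m - 1) * (1/16) * (3 * (∑ i, x i ^ 2) ^ 2 - 2 * ∑ i, x i ^ 4) := by
  show ∑ a ∈ _, ((1/2) * signedSum (a : Fin m → Bool) x) ^ 4 = _
  have hparity := two_mul_sum_filter_parity hε fun a : Fin m → Bool =>
    ((1/2) * signedSum a x) ^ 4
  have hfull : ∑ a : Fin m → Bool, ((1/2) * signedSum a x) ^ 4
      = 2 ^ m / 16 * (3 * (∑ i, x i ^ 2) ^ 2 - 2 * ∑ i, x i ^ 4) := by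
    simp only [mul_pow, ← mul_sum, sum_signedSum_pow_four]
    ring
  have htwisted : ∑ a : Fin m → Bool, totalSign a * ((1/2) * signedSum a x) ^ 4 = 0 := by
    have hk : 4 < Fintype.card (Fin m) := by rw [Fintype.card_fin]; omega
    simp only [mul_pow, mul_left_comm _ ((1 / 2 : ℝ) ^ 4), ← mul_sum,
      sum_totalSign_mul_signedSum_pow_eq_zero hk, mul_zero]
  have hpow : (2 : ℝ) ^ m = 2 * 2 ^ (m - 1) := by rw [← pow_succ']; congr 1; omega
  rw [hfull, htwisted, mul_zero, add_zero, hpow] at hparity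
  linarith
end

section
/- Let x₁, x₂, x₃, x₄ be real numbers. Then 2·Σ_{i=1}^4 x_i⁴ + Σ_{a even} ( (1/2)·Σ_{i=1}^4 (−1)^{a_i} x_i )⁴ + Σ_{a odd} ( (1/2)·Σ_{i=1}^4 (−1)^{a_i} x_i )⁴ = 3·( Σ_{i=1}^4 x_i² )², where the middle (resp. last) sum runs over sign vectors a ∈ {0,1}⁴ with a₁+a₂+a₃+a₄ even (resp. odd). -/
set_option maxHeartbeats 4000000

theorem stmt_5 (x : Fin 4 → ℝ) :
    2 * (∑ i, x i ^ 4)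
      + (∑ a ∈ Finset.univ.filter
          (fun a : Fin 4 → Bool => (∑ i, (if a i then 1 else 0)) % 2 = 0),
          ((1/2) * ∑ i, (if a i then (-1 : ℝ) else 1) * x i) ^ 4)
      + (∑ a ∈ Finset.univ.filter
          (fun a : Fin 4 → Bool => (∑ i, (if a i then 1 else 0)) % 2 = 1),
          ((1/2) * ∑ i, (if a i then (-1 : ℝ) else 1) * x i) ^ 4)
      = 3 * (∑ i, x i ^ 2) ^ 2 := by
  have key : ∀ f : (Fin 4 → Bool) → ℝ, (∑ a : Fin 4 → Bool, f a) =
      ∑ b₀ : Bool, ∑ b₁ : Bool, ∑ b₂ : Bool, ∑ b₃ : Bool, f ![b₀, b₁, b₂, b₃] := by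
    intro f
    rw [← Fintype.sum_equiv (Fin.consEquiv (fun _ : Fin 4 => Bool))
      (fun p : Bool × (Fin 3 → Bool) => f (Fin.cons p.1 p.2)) f (fun p => rfl),
      Fintype.sum_prod_type]
    refine Finset.sum_congr rfl fun b₀ _ => ?_
    rw [← Fintype.sum_equiv (Fin.consEquiv (fun _ : Fin 3 => Bool))
      (fun p : Bool × (Fin 2 → Bool) => f (Fin.cons b₀ (Fin.cons p.1 p.2)))
      (fun q => f (Fin.cons b₀ q)) (fun p => rfl), Fintype.sum_prod_type]
    refine Finset.sum_congr rfl fun b₁ _ => ?_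
    rw [← Fintype.sum_equiv (Fin.consEquiv (fun _ : Fin 2 => Bool))
      (fun p : Bool × (Fin 1 → Bool) => f (Fin.cons b₀ (Fin.cons b₁ (Fin.cons p.1 p.2))))
      (fun q => f (Fin.cons b₀ (Fin.cons b₁ q))) (fun p => rfl), Fintype.sum_prod_type]
    refine Finset.sum_congr rfl fun b₂ _ => ?_
    rw [← Fintype.sum_equiv (Fin.consEquiv (fun _ : Fin 1 => Bool))
      (fun p : Bool × (Fin 0 → Bool) =>
        f (Fin.cons b₀ (Fin.cons b₁ (Fin.cons b₂ (Fin.cons p.1 p.2)))))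
      (fun q => f (Fin.cons b₀ (Fin.cons b₁ (Fin.cons b₂ q)))) (fun p => rfl),
      Fintype.sum_prod_type]
    refine Finset.sum_congr rfl fun b₃ _ => ?_
    rw [Finset.sum_congr rfl fun (p : Fin 0 → Bool) _ => by
      show f _ = f ![b₀, b₁, b₂, b₃]
      congr 1
      ext i
      have h : p = Matrix.vecEmpty := Subsingleton.elim _ _
      rw [h]
      rfl]
    simp
  simp only [Finset.sum_filter, key, Fin.sum_univ_four]
  norm_num [Matrix.cons_val_zero, Matrix.cons_val_one, Matrix.head_cons,
    Matrix.cons_val_two, Matrix.tail_cons, Matrix.cons_val_three, Fintype.sum_bool]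
  ring
end

section
/- Let A be a commutative ring in which 2 and 3 are invertible, let μ, ν, ξ, a₂, a₄, a₆, z ∈ A, and let n ≥ 1. Set u = (1/4)μν² + a₂z, v = ((1/2)μνξ + a₄z)·zⁿ, w = ((1/4)μξ² + a₆z)·z^{2n}, and Δ = 4u³w − u²v² − 18uvw + 4v³ + 27w². Then Δ − ((1/4)μν² + a₂z)² · ( μ(ξ²a₂ − νξa₄ + ν²a₆) + (4a₂a₆ − a₄²)z ) · z^{2n+1} is divisible by z^{3n}. -/
theorem stmt_12 {A : Type*} [CommRing A] [Invertible (2 : A)] [Invertible (3 : A)]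
    (μ ν ξ a₂ a₄ a₆ z : A) (n : ℕ) (hn : 1 ≤ n)
    (u v w Δ : A)
    (hu : u = ⅟(2 : A) ^ 2 * μ * ν ^ 2 + a₂ * z)
    (hv : v = (⅟(2 : A) * μ * ν * ξ + a₄ * z) * z ^ n)
    (hw : w = (⅟(2 : A) ^ 2 * μ * ξ ^ 2 + a₆ * z) * z ^ (2 * n))
    (hΔ : Δ = 4 * u ^ 3 * w - u ^ 2 * v ^ 2 - 18 * u * v * w + 4 * v ^ 3 + 27 * w ^ 2) :
    z ^ (3 * n) ∣
      (Δ - (⅟(2 : A) ^ 2 * μ * ν ^ 2 + a₂ * z) ^ 2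
          * (μ * (ξ ^ 2 * a₂ - ν * ξ * a₄ + ν ^ 2 * a₆) + (4 * a₂ * a₆ - a₄ ^ 2) * z)
          * z ^ (2 * n + 1)) := by
  subst hu hv hw hΔ
  set i := ⅟(2 : A) with hi
  have h2 : i * 2 = 1 := invOf_mul_self 2
  refine ⟨-18 * (i ^ 2 * μ * ν ^ 2 + a₂ * z) * (i * μ * ν * ξ + a₄ * z)
      * (i ^ 2 * μ * ξ ^ 2 + a₆ * z)
      + 4 * (i * μ * ν * ξ + a₄ * z) ^ 3
      + 27 * (i ^ 2 * μ * ξ ^ 2 + a₆ * z) ^ 2 * z ^ n, ?_⟩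
  have key : 4 * (i ^ 2 * μ * ν ^ 2 + a₂ * z) * (i ^ 2 * μ * ξ ^ 2 + a₆ * z)
      - (i * μ * ν * ξ + a₄ * z) ^ 2
      - (μ * (ξ ^ 2 * a₂ - ν * ξ * a₄ + ν ^ 2 * a₆) + (4 * a₂ * a₆ - a₄ ^ 2) * z) * z
      = 0 := by
    linear_combination (i ^ 2 * (2 * i + 1) * μ ^ 2 * ν ^ 2 * ξ ^ 2
      + (2 * i + 1) * (μ * ν ^ 2 * a₆ + μ * ξ ^ 2 * a₂) * z - μ * ν * ξ * a₄ * z) * h2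
  linear_combination ((i ^ 2 * μ * ν ^ 2 + a₂ * z) ^ 2 * z ^ (2 * n)) * key
end

section
/- Let A be a commutative ring, let a₂, a₄, a₆, z ∈ A, let m ≥ 7, and set k = ⌊(m+1)/2⌋. Set u = a₂z, v = a₄·z^k, w = a₆·z^{m−1}, and Δ = 4u³w − u²v² − 18uvw + 4v³ + 27w². Then Δ − 4a₂³a₆·z^{m+2} + a₂²a₄²·z^{2k+2} is divisible by z^{m+3}. -/
theorem stmt_13 {A : Type*} [CommRing A] (a₂ a₄ a₆ z : A) (m : ℕ) (hm : 7 ≤ m)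
    (k : ℕ) (hk : k = (m + 1) / 2)
    (u v w Δ : A)
    (hu : u = a₂ * z) (hv : v = a₄ * z ^ k) (hw : w = a₆ * z ^ (m - 1))
    (hΔ : Δ = 4 * u ^ 3 * w - u ^ 2 * v ^ 2 - 18 * u * v * w + 4 * v ^ 3 + 27 * w ^ 2) :
    z ^ (m + 3) ∣ (Δ - 4 * a₂ ^ 3 * a₆ * z ^ (m + 2) + a₂ ^ 2 * a₄ ^ 2 * z ^ (2 * k + 2)) := by
  subst hu hv hw hΔ
  obtain ⟨e, rfl⟩ : ∃ e, m = e + 1 := ⟨m - 1, by omega⟩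
  simp only [Nat.add_sub_cancel]
  have key : 4 * (a₂ * z) ^ 3 * (a₆ * z ^ e) - (a₂ * z) ^ 2 * (a₄ * z ^ k) ^ 2
      - 18 * (a₂ * z) * (a₄ * z ^ k) * (a₆ * z ^ e) + 4 * (a₄ * z ^ k) ^ 3
      + 27 * (a₆ * z ^ e) ^ 2 - 4 * a₂ ^ 3 * a₆ * z ^ (e + 1 + 2)
      + a₂ ^ 2 * a₄ ^ 2 * z ^ (2 * k + 2)
      = (-18) * (a₂ * a₄ * a₆) * z ^ (k + e + 1) + 4 * a₄ ^ 3 * z ^ (3 * k)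
        + 27 * a₆ ^ 2 * z ^ (2 * e) := by ring
  rw [key]
  have h1 : z ^ (e + 1 + 3) ∣ z ^ (k + e + 1) := pow_dvd_pow z (by omega)
  have h2 : z ^ (e + 1 + 3) ∣ z ^ (3 * k) := pow_dvd_pow z (by omega)
  have h3 : z ^ (e + 1 + 3) ∣ z ^ (2 * e) := pow_dvd_pow z (by omega)
  exact dvd_add (dvd_add (h1.mul_left _) (h2.mul_left _)) (h3.mul_left _)
end

section
/- Let K be a field of characteristic zero, let n ≥ 3, and let u₁, v̄, w̄ ∈ K⟦z⟧ with constant coefficient u₁(0) ≠ 0. Set u = u₁z, v = v̄·zⁿ, w = w̄·z^{2n−1}, and Δ = 4u³w − u²v² − 18uvw + 4v³ + 27w². If z^{2n+3} divides Δ, then z divides v̄² − 4u₁w̄. -/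
/-!
Substituting `u = u₁z`, `v = v̄zⁿ`, `w = w̄z^{2n-1}`, every monomial of `Δ` is divisible by
`z^{2n+2}`, and only `4u³w` and `u²v²` have exactly that order once `n ≥ 3`. Hence
`Δ = z^{2n+2}·(u₁²(4u₁w̄ - v̄²) + z·r)`; cancelling `z^{2n+2}` from `z^{2n+3} ∣ Δ` leaves
`z ∣ u₁²(4u₁w̄ - v̄²)`, and `u₁` is a unit of `K⟦z⟧`.
-/

/-- The normalized discriminant `4f³ + 27g²` of `Y² = X³ + uX² + vX + w`. -/
def normalizedDiscriminant {R : Type*} [CommRing R] (u v w : R) : R :=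
  4 * u ^ 3 * w - u ^ 2 * v ^ 2 - 18 * u * v * w + 4 * v ^ 3 + 27 * w ^ 2

theorem normalizedDiscriminant_eq_pow_mul {R : Type*} [CommRing R] {n : ℕ} (hn : 3 ≤ n)
    (z u₁ vb wb : R) :
    ∃ r, normalizedDiscriminant (u₁ * z) (vb * z ^ n) (wb * z ^ (2 * n - 1)) =
      z ^ (2 * n + 2) * (u₁ ^ 2 * (4 * u₁ * wb - vb ^ 2) + z * r) := by
  obtain ⟨m, rfl⟩ : ∃ m, n = m + 3 := ⟨n - 3, by omega⟩
  refine ⟨(4 * vb ^ 3 - 18 * u₁ * vb * wb) * z ^ m + 27 * wb ^ 2 * z ^ (2 * m + 1), ?_⟩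
  rw [show 2 * (m + 3) - 1 = 2 * m + 5 by omega, normalizedDiscriminant]
  ring

theorem dvd_of_pow_succ_dvd_pow_mul {M : Type*} [MonoidWithZero M] [IsLeftCancelMulZero M]
    {x b : M} (hx : x ≠ 0) {k : ℕ} (h : x ^ (k + 1) ∣ x ^ k * b) : x ∣ b := by
  rw [pow_succ] at h
  exact (mul_dvd_mul_iff_left (pow_ne_zero k hx)).mp h

theorem stmt_15_general {K : Type*} [Field K] (n : ℕ) (hn : 3 ≤ n)
    (u₁ vb wb : PowerSeries K)
    (hu₁ : PowerSeries.constantCoeff u₁ ≠ 0)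
    (u v w Δ : PowerSeries K)
    (hu : u = u₁ * PowerSeries.X)
    (hv : v = vb * PowerSeries.X ^ n)
    (hw : w = wb * PowerSeries.X ^ (2 * n - 1))
    (hΔ : Δ = 4 * u ^ 3 * w - u ^ 2 * v ^ 2 - 18 * u * v * w + 4 * v ^ 3 + 27 * w ^ 2)
    (hdvd : (PowerSeries.X : PowerSeries K) ^ (2 * n + 3) ∣ Δ) :
    (PowerSeries.X : PowerSeries K) ∣ (vb ^ 2 - 4 * u₁ * wb) := by
  obtain ⟨r, hr⟩ := normalizedDiscriminant_eq_pow_mul hn PowerSeries.X u₁ vb wb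
  rw [hΔ, hu, hv, hw, ← normalizedDiscriminant, hr] at hdvd
  have hunit : IsUnit (u₁ ^ 2) :=
    (PowerSeries.isUnit_iff_constantCoeff.mpr hu₁.isUnit).pow 2
  have hleading : PowerSeries.X ∣ u₁ ^ 2 * (4 * u₁ * wb - vb ^ 2) :=
    (dvd_add_left (dvd_mul_right _ _)).mp
      (dvd_of_pow_succ_dvd_pow_mul PowerSeries.X_ne_zero hdvd)
  exact dvd_sub_comm.mp (hunit.dvd_mul_left.mp hleading)

theorem stmt_15 {K : Type*} [Field K] [CharZero K] (n : ℕ) (hn : 3 ≤ n)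
    (u₁ vb wb : PowerSeries K)
    (hu₁ : PowerSeries.constantCoeff u₁ ≠ 0)
    (u v w Δ : PowerSeries K)
    (hu : u = u₁ * PowerSeries.X)
    (hv : v = vb * PowerSeries.X ^ n)
    (hw : w = wb * PowerSeries.X ^ (2 * n - 1))
    (hΔ : Δ = 4 * u ^ 3 * w - u ^ 2 * v ^ 2 - 18 * u * v * w + 4 * v ^ 3 + 27 * w ^ 2)
    (hdvd : (PowerSeries.X : PowerSeries K) ^ (2 * n + 3) ∣ Δ) :
    (PowerSeries.X : PowerSeries K) ∣ (vb ^ 2 - 4 * u₁ * wb) :=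
  stmt_15_general n hn u₁ vb wb hu₁ u v w Δ hu hv hw hΔ hdvd
end
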